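/- arXiv:0704.2802 — 3 statements merged into one kernel-verified Lean document; each statement's English description precedes it below -/
import Mathlib

section
/- Let Λ be a finitely aligned k-graph. Then for each object v ∈ Λ⁰, the set α(W_v) is a closed subset of 2^Y. Consequently, identifying W_v with α(W_v), the space W_v is a compact metrizable space under the topology of pointwise convergence on Y. -/
open Filter Topology

/-- A higher-rank graph (`k`-graph): a countable small category `Λ` together with a
degree functor `d : Λ → ℕ^k` (with `ℕ^k` viewed as a one-object category under
addition) satisfying the unique factorization property. -/
structure KGraph (k : ℕ) where
  Obj : Type
  Mor : Type
  objCountable : Countable Obj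
  morCountable : Countable Mor
  r : Mor → Obj
  s : Mor → Obj
  id : Obj → Mor
  r_id : ∀ v, r (id v) = v
  s_id : ∀ v, s (id v) = v
  comp : (μ ν : Mor) → s μ = r ν → Mor
  r_comp : ∀ μ ν h, r (comp μ ν h) = r μ
  s_comp : ∀ μ ν h, s (comp μ ν h) = s ν
  id_comp : ∀ ν (h : s (id (r ν)) = r ν), comp (id (r ν)) ν h = ν
  comp_id : ∀ μ (h : s μ = r (id (s μ))), comp μ (id (s μ)) h = μ
  assoc : ∀ l μ ν (h₁ : s l = r μ) (h₂ : s (comp l μ h₁) = r ν) (h₁' : s μ = r ν)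
    (h₂' : s l = r (comp μ ν h₁')), comp (comp l μ h₁) ν h₂ = comp l (comp μ ν h₁') h₂'
  d : Mor → (Fin k → ℕ)
  d_id : ∀ v, d (id v) = 0
  d_comp : ∀ μ ν h, d (comp μ ν h) = d μ + d ν
  factor_exists : ∀ (l : Mor) (m n : Fin k → ℕ), d l = m + n →
    ∃ (μ ν : Mor) (h : s μ = r ν), comp μ ν h = l ∧ d μ = m ∧ d ν = n
  factor_unique : ∀ (l : Mor) (m n : Fin k → ℕ), d l = m + n →
    ∀ (μ ν : Mor) (h : s μ = r ν) (μ' ν' : Mor) (h' : s μ' = r ν'),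
      comp μ ν h = l → comp μ' ν' h' = l → d μ = m → d ν = n → d μ' = m → d ν' = n →
      μ = μ' ∧ ν = ν'

namespace KGraph

variable {k : ℕ} (G : KGraph k)

/-- `μ ≤ λ` in `Λ`: `λ = μν` for some `ν`. -/
def le (μ l : G.Mor) : Prop := ∃ (ν : G.Mor) (h : G.s μ = G.r ν), G.comp μ ν h = l

/-- An element of the path space `W`: an `N`-path for some `N ∈ (ℕ ∪ {∞})^k`, i.e. a
family `{λ_m : m ∈ ℕ^k, m ≤ N}` with `d(λ_m) = m` and `λ_m ≤ λ_n` whenever `m ≤ n`. -/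
structure Path where
  deg : Fin k → ℕ∞
  seg : (m : Fin k → ℕ) → (∀ i, (m i : ℕ∞) ≤ deg i) → G.Mor
  d_seg : ∀ m h, G.d (seg m h) = m
  mono : ∀ m n (hm : ∀ i, (m i : ℕ∞) ≤ deg i) (hn : ∀ i, (n i : ℕ∞) ≤ deg i),
    (∀ i, m i ≤ n i) → G.le (seg m hm) (seg n hn)

/-- `y ≤ w` for a finite path `y ∈ Y = Λ` and `w ∈ W`: `y = w_{d(y)}`. -/
def lePath (y : G.Mor) (w : G.Path) : Prop :=
  ∃ h : ∀ i, ((G.d y) i : ℕ∞) ≤ w.deg i, w.seg (G.d y) h = y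

open Classical in
/-- The map `α : W → 2^Y = {0,1}^Y`, `α(w)(y) = 1` iff `y ≤ w`. -/
noncomputable def alpha (w : G.Path) : G.Mor → Bool :=
  fun y => if G.lePath y w then true else false


/-- The topology of pointwise convergence on `Y`: the topology on the path space `W`
pulled back from the product topology on `2^Y = {0,1}^Y` via the injection `α`. -/
noncomputable instance : TopologicalSpace G.Path :=
  TopologicalSpace.induced G.alpha inferInstance

/-- `w₀`, the degree-zero segment of a path `w`. -/
def Path.root (w : G.Path) : G.Mor := w.seg (fun _ => 0) (fun i => by simp)

/-- `W_v = {w ∈ W : w₀ = v}`. -/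
def Wv (v : G.Obj) : Set G.Path := {w : G.Path | w.root = G.id v}

/-- `Λ` is finitely aligned: for all `λ, μ` the set
`E_{λ,μ} = {ν : λ ≤ ν, μ ≤ ν, d(ν) = d(λ) ∨ d(μ)}` is finite. -/
def FinitelyAligned : Prop :=
  ∀ l μ : G.Mor, {ν : G.Mor | G.le l ν ∧ G.le μ ν ∧ G.d ν = G.d l ⊔ G.d μ}.Finite

end KGraph

namespace KGraph

variable {k : ℕ} (G : KGraph k)

theorem seg_congr' (w : G.Path) {m m' : Fin k → ℕ} (h : m = m')
    (hm : ∀ i, (m i : ℕ∞) ≤ w.deg i) (hm' : ∀ i, (m' i : ℕ∞) ≤ w.deg i) :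
    w.seg m hm = w.seg m' hm' := by subst h; rfl

theorem alpha_eq_true {w : G.Path} {y : G.Mor} : G.alpha w y = true ↔ G.lePath y w := by
  by_cases h : G.lePath y w <;> simp [alpha, h]

theorem alpha_eq_false {w : G.Path} {y : G.Mor} : G.alpha w y = false ↔ ¬ G.lePath y w := by
  by_cases h : G.lePath y w <;> simp [alpha, h]

theorem eq_id_of_d_eq_zero (ε : G.Mor) (h : G.d ε = 0) : ε = G.id (G.r ε) := by
  have := G.factor_unique ε 0 0 (by rw [h, add_zero])
    (G.id (G.r ε)) ε (by rw [G.s_id]) ε (G.id (G.s ε)) (by rw [G.r_id])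
    (G.id_comp ε _) (G.comp_id ε _) (G.d_id _) h h (G.d_id _)
  exact this.1.symm

theorem eq_of_le_of_d_eq {μ ν : G.Mor} (hle : G.le μ ν) (hd : G.d μ = G.d ν) : μ = ν := by
  obtain ⟨ε, h, hc⟩ := hle
  have hdc : G.d ν = G.d μ + G.d ε := by rw [← hc, G.d_comp]
  have hdε : G.d ε = 0 := by
    funext i
    have h1 := congrFun hdc i
    have h2 := congrFun hd i
    simp only [Pi.add_apply, Pi.zero_apply] at h1 h2 ⊢
    omega
  have hε : ε = G.id (G.s μ) := by
    rw [G.eq_id_of_d_eq_zero ε hdε, h]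
  subst hε
  rw [G.comp_id] at hc
  exact hc

/-- Conditions characterizing `α(W_v)`. -/
def condSet (v : G.Obj) : Set (G.Mor → Bool) :=
  {f | f (G.id v) = true ∧
    (∀ y x : G.Mor, G.le x y → f y = true → f x = true) ∧
    (∀ y z : G.Mor, f y = true → f z = true →
      ∃ ν, f ν = true ∧ G.le y ν ∧ G.le z ν ∧ G.d ν = G.d y ⊔ G.d z)}

theorem closed_eval (y : G.Mor) (b : Bool) : IsClosed {f : G.Mor → Bool | f y = b} := by
  have : {f : G.Mor → Bool | f y = b} = (fun f : G.Mor → Bool => f y) ⁻¹' {b} := rfl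
  rw [this]
  exact (isClosed_singleton (x := b)).preimage (continuous_apply y)

theorem closed_imp (y : G.Mor) (s : Set (G.Mor → Bool)) (hs : IsClosed s) :
    IsClosed {f : G.Mor → Bool | f y = true → f ∈ s} := by
  have heq : {f : G.Mor → Bool | f y = true → f ∈ s} = {f : G.Mor → Bool | f y = false} ∪ s := by
    ext f
    simp only [Set.mem_setOf_eq, Set.mem_union]
    cases hfy : f y <;> simp
  rw [heq]
  exact (G.closed_eval y false).union hs

theorem closed_exists (s : Set G.Mor) (hs : s.Finite) :
    IsClosed {f : G.Mor → Bool | ∃ ν ∈ s, f ν = true} := by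
  have heq : {f : G.Mor → Bool | ∃ ν ∈ s, f ν = true}
      = ⋃ ν ∈ s, {f : G.Mor → Bool | f ν = true} := by
    ext f; simp
  rw [heq]
  exact hs.isClosed_biUnion fun ν _ => G.closed_eval ν true

theorem condSet_closed (hG : G.FinitelyAligned) (v : G.Obj) : IsClosed (G.condSet v) := by
  have heq : G.condSet v = {f : G.Mor → Bool | f (G.id v) = true} ∩
      ((⋂ (y : G.Mor), ⋂ (x : G.Mor), ⋂ (_ : G.le x y),
          {f : G.Mor → Bool | f y = true → f ∈ {f : G.Mor → Bool | f x = true}}) ∩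
        (⋂ (y : G.Mor), ⋂ (z : G.Mor),
          {f : G.Mor → Bool | f y = true → f ∈ {f : G.Mor → Bool | f z = true →
            f ∈ {f : G.Mor → Bool | ∃ ν ∈ {ν : G.Mor | G.le y ν ∧ G.le z ν ∧
              G.d ν = G.d y ⊔ G.d z}, f ν = true}}})) := by
    ext f
    simp only [condSet, Set.mem_setOf_eq, Set.mem_inter_iff, Set.mem_iInter]
    constructor
    · rintro ⟨h1, h2, h3⟩
      refine ⟨h1, fun y x hxy hy => h2 y x hxy hy, fun y z hy hz => ?_⟩
      obtain ⟨ν, hν, h4, h5, h6⟩ := h3 y z hy hz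
      exact ⟨ν, ⟨h4, h5, h6⟩, hν⟩
    · rintro ⟨h1, h2, h3⟩
      refine ⟨h1, fun y x hxy hy => h2 y x hxy hy, fun y z hy hz => ?_⟩
      obtain ⟨ν, ⟨h4, h5, h6⟩, hν⟩ := h3 y z hy hz
      exact ⟨ν, hν, h4, h5, h6⟩
  rw [heq]
  refine (G.closed_eval _ true).inter (IsClosed.inter ?_ ?_)
  · exact isClosed_iInter fun y => isClosed_iInter fun x => isClosed_iInter fun _ =>
      G.closed_imp y _ (G.closed_eval x true)
  · exact isClosed_iInter fun y => isClosed_iInter fun z =>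
      G.closed_imp y _ (G.closed_imp z _ (G.closed_exists _ (hG y z)))

/-- The sup of degrees of paths in the set determined by `f`. -/
noncomputable def supDeg (f : G.Mor → Bool) : Fin k → ℕ∞ :=
  fun i => ⨆ y : {y : G.Mor // f y = true}, (G.d y.1 i : ℕ∞)

theorem seg_unique (f : G.Mor → Bool)
    (hc : ∀ y z : G.Mor, f y = true → f z = true →
      ∃ ν, f ν = true ∧ G.le y ν ∧ G.le z ν ∧ G.d ν = G.d y ⊔ G.d z)
    {y z : G.Mor} (hy : f y = true) (hz : f z = true) (hd : G.d y = G.d z) : y = z := by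
  obtain ⟨ν, _, hyν, hzν, hdν⟩ := hc y z hy hz
  have hdν' : G.d ν = G.d y := by rw [hdν, hd, sup_idem]
  have h1 : y = ν := G.eq_of_le_of_d_eq hyν hdν'.symm
  have h2 : z = ν := G.eq_of_le_of_d_eq hzν (by rw [hdν', hd])
  rw [h1, h2]

theorem exists_ge (f : G.Mor → Bool) (hne : ∃ y, f y = true)
    (hc : ∀ y z : G.Mor, f y = true → f z = true →
      ∃ ν, f ν = true ∧ G.le y ν ∧ G.le z ν ∧ G.d ν = G.d y ⊔ G.d z)
    (m : Fin k → ℕ) (hm : ∀ i, (m i : ℕ∞) ≤ G.supDeg f i) :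
    ∃ y, f y = true ∧ ∀ i, m i ≤ G.d y i := by
  have key : ∀ s : Finset (Fin k), ∃ y, f y = true ∧ ∀ i ∈ s, m i ≤ G.d y i := by
    intro s
    induction s using Finset.induction_on with
    | empty =>
      obtain ⟨y, hy⟩ := hne
      exact ⟨y, hy, by simp⟩
    | @insert a s hns ih =>
      obtain ⟨y, hy, hys⟩ := ih
      by_cases hma : m a = 0
      · refine ⟨y, hy, fun i hi => ?_⟩
        rcases Finset.mem_insert.1 hi with rfl | hi
        · omega
        · exact hys i hi
      · have h1 : ((m a - 1 : ℕ) : ℕ∞) < G.supDeg f a := by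
          refine lt_of_lt_of_le ?_ (hm a)
          exact_mod_cast Nat.sub_lt (Nat.pos_of_ne_zero hma) one_pos
        rw [supDeg, lt_iSup_iff] at h1
        obtain ⟨⟨z, hz⟩, hzlt⟩ := h1
        have hza : m a ≤ G.d z a := by
          have : (m a - 1 : ℕ) < G.d z a := by exact_mod_cast hzlt
          omega
        obtain ⟨ν, hν, hyν, hzν, hdν⟩ := hc y z hy hz
        refine ⟨ν, hν, fun i hi => ?_⟩
        have hdνi : G.d ν i = G.d y i ⊔ G.d z i := by rw [hdν]; rfl
        rcases Finset.mem_insert.1 hi with rfl | hi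
        · rw [hdνi]; exact le_trans hza le_sup_right
        · rw [hdνi]; exact le_trans (hys i hi) le_sup_left
  obtain ⟨y, hy, hys⟩ := key Finset.univ
  exact ⟨y, hy, fun i => hys i (Finset.mem_univ i)⟩

theorem exists_seg (f : G.Mor → Bool) (hne : ∃ y, f y = true)
    (hb : ∀ y x : G.Mor, G.le x y → f y = true → f x = true)
    (hc : ∀ y z : G.Mor, f y = true → f z = true →
      ∃ ν, f ν = true ∧ G.le y ν ∧ G.le z ν ∧ G.d ν = G.d y ⊔ G.d z)
    (m : Fin k → ℕ) (hm : ∀ i, (m i : ℕ∞) ≤ G.supDeg f i) :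
    ∃ y, f y = true ∧ G.d y = m := by
  obtain ⟨y, hy, hym⟩ := G.exists_ge f hne hc m hm
  have hdy : G.d y = m + fun i => G.d y i - m i := by
    funext i
    simp only [Pi.add_apply]
    have := hym i
    omega
  obtain ⟨μ, ρ, h, hcomp, hdμ, _⟩ := G.factor_exists y m _ hdy
  exact ⟨μ, hb y μ ⟨ρ, h, hcomp⟩ hy, hdμ⟩

theorem image_alpha_eq (v : G.Obj) : G.alpha '' G.Wv v = G.condSet v := by
  ext f
  constructor
  · rintro ⟨w, hw, rfl⟩
    refine ⟨?_, ?_, ?_⟩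
    · rw [alpha_eq_true]
      have hd0 : G.d (G.id v) = fun _ => 0 := by funext i; rw [G.d_id]; rfl
      have hd : ∀ i, ((G.d (G.id v)) i : ℕ∞) ≤ w.deg i := fun i => by
        rw [hd0]; simp
      refine ⟨hd, ?_⟩
      rw [G.seg_congr' w hd0 hd (fun i => by simp)]
      exact hw
    · intro y x hxy hy
      rw [alpha_eq_true] at hy ⊢
      obtain ⟨hyd, hyseg⟩ := hy
      obtain ⟨ρ, hρ, hcomp⟩ := hxy
      have hdy : G.d y = G.d x + G.d ρ := by rw [← hcomp, G.d_comp]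
      have hdx_le : ∀ i, G.d x i ≤ G.d y i := fun i => by
        have := congrFun hdy i
        simp only [Pi.add_apply] at this
        omega
      have hxd : ∀ i, (G.d x i : ℕ∞) ≤ w.deg i := fun i =>
        le_trans (by exact_mod_cast hdx_le i) (hyd i)
      obtain ⟨σ, hσ, hcomp2⟩ := w.mono (G.d x) (G.d y) hxd hyd hdx_le
      rw [hyseg] at hcomp2
      have hdσ : G.d σ = G.d ρ := by
        have h1 : G.d y = G.d x + G.d σ := by
          rw [← hcomp2, G.d_comp, w.d_seg]
        funext i
        have e1 := congrFun h1 i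
        have e2 := congrFun hdy i
        simp only [Pi.add_apply] at e1 e2
        omega
      have := G.factor_unique y (G.d x) (G.d ρ) hdy (w.seg (G.d x) hxd) σ hσ x ρ hρ
        hcomp2 hcomp (w.d_seg _ hxd) hdσ rfl rfl
      exact ⟨hxd, this.1⟩
    · intro y z hy hz
      rw [alpha_eq_true] at hy hz
      obtain ⟨hyd, hyseg⟩ := hy
      obtain ⟨hzd, hzseg⟩ := hz
      have hm : ∀ i, ((G.d y ⊔ G.d z) i : ℕ∞) ≤ w.deg i := fun i => by
        have hmi : (G.d y ⊔ G.d z) i = G.d y i ⊔ G.d z i := rfl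
        rcases le_total (G.d y i) (G.d z i) with h | h
        · rw [hmi, sup_eq_right.2 h]; exact hzd i
        · rw [hmi, sup_eq_left.2 h]; exact hyd i
      refine ⟨w.seg (G.d y ⊔ G.d z) hm, ?_, ?_, ?_, w.d_seg _ hm⟩
      · rw [alpha_eq_true]
        have hd : G.d (w.seg (G.d y ⊔ G.d z) hm) = G.d y ⊔ G.d z := w.d_seg _ hm
        refine ⟨fun i => by rw [hd]; exact hm i, ?_⟩
        exact G.seg_congr' w hd _ hm
      · have := w.mono (G.d y) (G.d y ⊔ G.d z) hyd hm (fun i => le_sup_left)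
        rwa [hyseg] at this
      · have := w.mono (G.d z) (G.d y ⊔ G.d z) hzd hm (fun i => le_sup_right)
        rwa [hzseg] at this
  · rintro ⟨ha, hb, hc⟩
    have hne : ∃ y, f y = true := ⟨G.id v, ha⟩
    have hseg := G.exists_seg f hne hb hc
    refine ⟨⟨G.supDeg f, fun m hm => (hseg m hm).choose,
      fun m hm => (hseg m hm).choose_spec.2, ?_⟩, ?_, ?_⟩
    · -- mono
      intro m n hm hn hmn
      obtain ⟨hyn, hdn⟩ := (hseg n hn).choose_spec
      have hdyn : G.d (hseg n hn).choose = m + fun i => n i - m i := by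
        rw [hdn]; funext i; simp only [Pi.add_apply]; have := hmn i; omega
      obtain ⟨μ, ρ, h, hcomp, hdμ, _⟩ := G.factor_exists _ m _ hdyn
      have hfμ : f μ = true := hb _ μ ⟨ρ, h, hcomp⟩ hyn
      have heq : (hseg m hm).choose = μ :=
        G.seg_unique f hc (hseg m hm).choose_spec.1 hfμ
          (by rw [(hseg m hm).choose_spec.2, hdμ])
      show G.le (hseg m hm).choose (hseg n hn).choose
      rw [heq]
      exact ⟨ρ, h, hcomp⟩
    · -- root = id v
      have hz : ∀ i, (((fun _ => 0 : Fin k → ℕ)) i : ℕ∞) ≤ G.supDeg f i := fun i => by simp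
      show (hseg (fun _ => 0) hz).choose = G.id v
      refine G.seg_unique f hc (hseg (fun _ => 0) hz).choose_spec.1 ha ?_
      rw [(hseg (fun _ => 0) hz).choose_spec.2, G.d_id]
      rfl
    · -- alpha w = f
      funext y
      by_cases hfy : f y = true
      · rw [hfy, alpha_eq_true]
        have hyd : ∀ i, (G.d y i : ℕ∞) ≤ G.supDeg f i := fun i => by
          simp only [supDeg]
          exact le_iSup (fun z : {y : G.Mor // f y = true} => ((G.d z.1 i : ℕ∞))) ⟨y, hfy⟩
        refine ⟨hyd, ?_⟩
        exact G.seg_unique f hc (hseg _ hyd).choose_spec.1 hfy (hseg _ hyd).choose_spec.2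
      · have hfy' : f y = false := by simpa using hfy
        rw [hfy', G.alpha_eq_false]
        rintro ⟨hd, hsegeq⟩
        have hyy : (hseg (G.d y) hd).choose = y := hsegeq
        exact hfy (hyy ▸ (hseg (G.d y) hd).choose_spec.1)

end KGraph

/-- Theorem 2.2: for a finitely aligned `k`-graph and each object `v ∈ Λ⁰`, the set
`α(W_v)` is closed in `2^Y`; hence, identifying `W_v` with `α(W_v)`, the space `W_v` is a
compact metrizable space under the topology of pointwise convergence on `Y`. -/
theorem stmt1 {k : ℕ} (G : KGraph k) (hG : G.FinitelyAligned) (v : G.Obj) :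
    IsClosed (G.alpha '' G.Wv v) ∧ IsCompact (G.alpha '' G.Wv v) ∧
      TopologicalSpace.MetrizableSpace (G.alpha '' G.Wv v) := by
  have hclosed : IsClosed (G.alpha '' G.Wv v) := by
    rw [G.image_alpha_eq v]
    exact G.condSet_closed hG v
  haveI := G.morCountable
  exact ⟨hclosed, hclosed.isCompact, inferInstance⟩
end

section
/- For n = 1, 2, 3, …, let X_n be a locally compact, second countable, Hausdorff topological space and A = Π_{n=1}^∞ X_n^∞ the product of the one-point compactifications. Then the equivalence relation R on A defined by x R y iff Q(x) = Q(y) — equivalently, x R y iff N(x) = N(y) and x_i = y_i for all i with 1 ≤ i ≤ N(x), where N(x) is the smallest n ≥ 0 such that x_{n+1} = ∞_{n+1} (and N(x) = ∞ if no coordinate of x is a point at infinity) — is a closed subset of A × A. -/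
open Filter Topology

/-- The set `W₀ = Y₀ ∪ Z`: the disjoint union of the finite products
`Y^k = X_1 × ⋯ × X_k` (with `Y^0 = {0}` a single point, the empty string) and the
infinite product `Z = Π_{n} X_n`.  (Indices are `0`-based here: `X 0, X 1, …` play the
roles of `X_1, X_2, …`.) -/
def W0 (X : ℕ → Type) : Type := (Σ k : ℕ, ∀ i : Fin k, X i) ⊕ (∀ n, X n)

namespace W0

variable {X : ℕ → Type}

/-- A finite string, an element of `Y₀ = ∪_k Y^k ⊂ W₀`. -/
def fin (p : Σ k : ℕ, ∀ i : Fin k, X i) : W0 X := Sum.inl p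

/-- An infinite string, an element of `Z = Π_n X_n ⊂ W₀`. -/
def inf (z : ∀ n, X n) : W0 X := Sum.inr z

/-- The point `0`, the empty string: the unique element of `Y^0`. -/
def zero : W0 X := Sum.inl ⟨0, fun i => i.elim0⟩

/-- The length `ℓ(w) ∈ ℕ ∪ {∞}` of an element of `W₀`. -/
def len : W0 X → ℕ∞ := Sum.elim (fun p => (p.1 : ℕ∞)) (fun _ => ⊤)

/-- The `i`-th coordinate of an element of `W₀`, as an element of the one-point
compactification `X_i^∞`; it is taken to be `∞_i` when `i ≥ ℓ(w)`. -/
def coord (w : W0 X) (i : ℕ) : OnePoint (X i) :=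
  Sum.elim
    (fun p : Σ k : ℕ, ∀ j : Fin k, X j =>
      if h : i < p.1 then ((p.2 ⟨i, h⟩ : X i) : OnePoint (X i)) else OnePoint.infty)
    (fun z => ((z i : X i) : OnePoint (X i))) w

/-- The value of a point of `X^∞` other than `∞`. -/
noncomputable def val {Y : Type} (o : OnePoint Y) (h : o ≠ OnePoint.infty) : Y :=
  (OnePoint.ne_infty_iff_exists.mp h).choose

open Classical in
/-- The truncation map `Q : A = Π_n X_n^∞ → W₀`: `Q({x_i}) = {x_i} ∈ Z` if no
coordinate is a point at infinity; `Q({x_i}) = (x_1, …, x_n) ∈ Y^n` if `n` is smallest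
with `x_{n+1} = ∞_{n+1}`; `Q({x_i}) = 0` if `x_1 = ∞_1`. -/
noncomputable def Q (x : ∀ n, OnePoint (X n)) : W0 X :=
  if h : ∃ n, x n = OnePoint.infty then
    fin ⟨Nat.find h, fun i => val (x i) (Nat.find_min h i.isLt)⟩
  else
    inf fun n => val (x n) (fun hn => h ⟨n, hn⟩)

/-- `W₀` carries the quotient topology induced by the surjection `Q` from the product
`A = Π_n X_n^∞` of the one-point compactifications. -/
noncomputable instance [∀ n, TopologicalSpace (X n)] : TopologicalSpace (W0 X) :=
  TopologicalSpace.coinduced Q Pi.topologicalSpace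

end W0

/-!
Padding `Q(x)` with `∞` beyond its length gives the sequence that agrees with `x` before
its first point at infinity and is `∞` from there on, and it determines `Q(x)`. Hence `x R y` iff for every `n`, either `x_n = y_n` or both `x` and `y`
have already met a point at infinity by index `n`. For each `n` this is a closed
condition: the diagonal of the Hausdorff space `X_n^∞` is closed, and so is the set of
points having some `∞_j`, `j ≤ n`, among their coordinates, as `{∞_j}` is closed.
-/

open Set OnePoint

section Truncate

variable {Y : ℕ → Type*} (c : ∀ n, Y n)

open Classical in
noncomputable def truncate (x : ∀ n, Y n) (n : ℕ) : Y n :=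
  if ∃ j ≤ n, x j = c j then c n else x n

variable {c}

theorem truncate_of_exists {x : ∀ n, Y n} {n : ℕ} (h : ∃ j ≤ n, x j = c j) :
    truncate c x n = c n := by
  classical
  simp [truncate, h]

theorem truncate_of_not_exists {x : ∀ n, Y n} {n : ℕ} (h : ¬∃ j ≤ n, x j = c j) :
    truncate c x n = x n := by
  classical
  simp only [truncate, h, if_false]

theorem truncate_eq_iff_exists {x : ∀ n, Y n} {n : ℕ} :
    truncate c x n = c n ↔ ∃ j ≤ n, x j = c j := by
  refine ⟨fun h => ?_, truncate_of_exists⟩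
  by_contra hx
  exact hx ⟨n, le_rfl, (truncate_of_not_exists hx).symm.trans h⟩

theorem truncate_eq_truncate_iff {x y : ∀ n, Y n} :
    truncate c x = truncate c y ↔
      ∀ n, x n = y n ∨ (∃ j ≤ n, x j = c j) ∧ ∃ j ≤ n, y j = c j := by
  constructor
  · intro h n
    have hxy : (∃ j ≤ n, x j = c j) ↔ ∃ j ≤ n, y j = c j := by
      rw [← truncate_eq_iff_exists, ← truncate_eq_iff_exists, h]
    by_cases hx : ∃ j ≤ n, x j = c j
    · exact Or.inr ⟨hx, hxy.mp hx⟩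
    · have hy : ¬∃ j ≤ n, y j = c j := hxy.not.mp hx
      left
      rw [← truncate_of_not_exists hx, ← truncate_of_not_exists hy, h]
  · intro h
    have propagate : ∀ {x y : ∀ n, Y n}, (∀ n, x n = y n ∨ (∃ j ≤ n, x j = c j) ∧
        ∃ j ≤ n, y j = c j) → ∀ n, (∃ j ≤ n, x j = c j) → ∃ j ≤ n, y j = c j := by
      rintro x y h n ⟨j, hjn, hj⟩
      rcases h j with hxy | ⟨-, k, hkj, hk⟩
      · exact ⟨j, hjn, hxy ▸ hj⟩
      · exact ⟨k, hkj.trans hjn, hk⟩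
    have h' : ∀ n, y n = x n ∨ (∃ j ≤ n, y j = c j) ∧ ∃ j ≤ n, x j = c j :=
      fun n => (h n).imp Eq.symm And.symm
    funext n
    by_cases hx : ∃ j ≤ n, x j = c j
    · rw [truncate_of_exists hx, truncate_of_exists (propagate h n hx)]
    · have hy : ¬∃ j ≤ n, y j = c j := fun hy => hx (propagate h' n hy)
      rw [truncate_of_not_exists hx, truncate_of_not_exists hy]
      exact (h n).resolve_right fun hxy => hx hxy.1

variable [∀ n, TopologicalSpace (Y n)]

theorem isClosed_setOf_exists_le_eq [∀ n, T1Space (Y n)] (c : ∀ n, Y n) (n : ℕ) :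
    IsClosed {x : ∀ n, Y n | ∃ j ≤ n, x j = c j} := by
  have : {x : ∀ n, Y n | ∃ j ≤ n, x j = c j} = ⋃ j ∈ Iic n, (fun x => x j) ⁻¹' {c j} := by
    ext; simp
  rw [this]
  exact (finite_Iic n).isClosed_biUnion fun j _ => isClosed_singleton.preimage (continuous_apply j)

theorem isClosed_setOf_truncate_eq [∀ n, T2Space (Y n)] (c : ∀ n, Y n) :
    IsClosed {p : (∀ n, Y n) × (∀ n, Y n) | truncate c p.1 = truncate c p.2} := by
  simp only [truncate_eq_truncate_iff, ofPred_forall, ofPred_or, ofPred_and]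
  exact isClosed_iInter fun n => (isClosed_eq (by fun_prop) (by fun_prop)).union
    (((isClosed_setOf_exists_le_eq c n).preimage continuous_fst).inter
      ((isClosed_setOf_exists_le_eq c n).preimage continuous_snd))

end Truncate

namespace W0

variable {X : ℕ → Type}

theorem coe_val {Y : Type} (o : OnePoint Y) (h : o ≠ OnePoint.infty) :
    ((val o h : Y) : OnePoint Y) = o :=
  (OnePoint.ne_infty_iff_exists.mp h).choose_spec

theorem coord_injective : Function.Injective (coord : W0 X → ∀ i, OnePoint (X i)) := by
  rintro (⟨k, f⟩ | z) (⟨k', f'⟩ | z') h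
  · obtain rfl : k = k' := by
      rcases lt_trichotomy k k' with hk | hk | hk
      · simpa [coord, hk, fin] using congrFun h k
      · exact hk
      · simpa [coord, hk] using congrFun h k'
    congr 2
    funext i
    simpa [coord] using congrFun h i
  · simpa [coord] using congrFun h k
  · simpa [coord] using congrFun h k'
  · congr 1
    funext i
    simpa [coord] using congrFun h i

theorem coord_Q (x : ∀ n, OnePoint (X n)) : (Q x).coord = truncate (fun _ => ∞) x := by
  classical
  funext i
  by_cases hi : ∃ j ≤ i, x j = ∞
  · have hx : ∃ m, x m = ∞ := hi.imp fun _ => And.right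
    have : ¬i < Nat.find hx := fun hlt => by
      obtain ⟨j, hji, hj⟩ := hi
      exact Nat.find_min hx (hji.trans_lt hlt) hj
    simp [Q, hx, fin, coord, this, truncate_of_exists hi]
  · rw [truncate_of_not_exists hi]
    by_cases hx : ∃ m, x m = ∞
    · have : i < Nat.find hx := (Nat.lt_find_iff hx i).mpr fun j hj hxj => hi ⟨j, hj, hxj⟩
      rw [Q, dif_pos hx]
      simp only [fin, coord, Sum.elim_inl, dif_pos this]
      exact coe_val _ _
    · rw [Q, dif_neg hx]
      exact coe_val _ _

theorem Q_eq_Q_iff {x y : ∀ n, OnePoint (X n)} :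
    Q x = Q y ↔ truncate (fun _ => ∞) x = truncate (fun _ => ∞) y := by
  rw [← coord_Q, ← coord_Q]
  exact coord_injective.eq_iff.symm

end W0

theorem stmt7_general (X : ℕ → Type) [∀ n, TopologicalSpace (X n)]
    [∀ n, LocallyCompactSpace (X n)]
    [∀ n, T2Space (X n)] :
    IsClosed {p : (∀ n, OnePoint (X n)) × (∀ n, OnePoint (X n)) |
      W0.Q p.1 = W0.Q p.2} := by
  simp only [W0.Q_eq_Q_iff]
  exact isClosed_setOf_truncate_eq _

/-- The equivalence relation `R` on `A = Π_n X_n^∞` defined by `x R y` iff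
`Q(x) = Q(y)` (equivalently, `x` and `y` are truncated at the same place and agree
before that place) is a closed subset of `A × A`. -/
theorem stmt7 (X : ℕ → Type) [∀ n, TopologicalSpace (X n)]
    [∀ n, LocallyCompactSpace (X n)] [∀ n, SecondCountableTopology (X n)]
    [∀ n, T2Space (X n)] :
    IsClosed {p : (∀ n, OnePoint (X n)) × (∀ n, OnePoint (X n)) |
      W0.Q p.1 = W0.Q p.2} :=
  stmt7_general X
end

section
/- For n = 1, 2, 3, …, let X_n be a locally compact, second countable, Hausdorff topological space, and let W_0 = ({0} ∪ ∪_{k=1}^∞ X_1 × ⋯ × X_k) ∪ Π_{n=1}^∞ X_n carry the quotient topology induced by the truncation map Q from A = Π_{n=1}^∞ X_n^∞. Then the space W = W_0 \ {0} = (∪_{k=1}^∞ X_1 × ⋯ × X_k) ∪ Π_{n=1}^∞ X_n, with the subspace topology inherited from W_0, is a locally compact metrizable space. -/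
open Filter Topology

/-! ### Auxiliary material for the proof -/

section Aux

open Set

lemma W0.coe_val_s8 {Y : Type} (o : OnePoint Y) (h : o ≠ OnePoint.infty) :
    ((W0.val o h : Y) : OnePoint Y) = o :=
  (OnePoint.ne_infty_iff_exists.mp h).choose_spec

lemma W0.val_coe {Y : Type} (a : Y) (h : ((a : OnePoint Y)) ≠ OnePoint.infty) :
    W0.val (a : OnePoint Y) h = a :=
  OnePoint.coe_injective (W0.coe_val_s8 _ h)

/-- A locally compact, second countable Hausdorff space has second countable
one-point compactification. -/
lemma onePoint_secondCountable (Y : Type*) [TopologicalSpace Y] [LocallyCompactSpace Y]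
    [SecondCountableTopology Y] [T2Space Y] : SecondCountableTopology (OnePoint Y) := by
  set K := CompactExhaustion.choice Y with hK
  set B := TopologicalSpace.countableBasis Y with hB
  set S : Set (Set (OnePoint Y)) :=
    ((fun u : Set Y => ((↑) '' u : Set (OnePoint Y))) '' B) ∪
      Set.range (fun m => ((↑) '' (K m)ᶜ ∪ {OnePoint.infty} : Set (OnePoint Y))) with hS
  have hpre : ∀ m : ℕ, ((↑) ⁻¹' (((↑) '' (K m)ᶜ ∪ {OnePoint.infty}) : Set (OnePoint Y)) : Set Y)
      = (K m)ᶜ := by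
    intro m
    ext y
    simp [OnePoint.coe_eq_coe, OnePoint.coe_ne_infty]
  have hbasis : TopologicalSpace.IsTopologicalBasis S := by
    apply TopologicalSpace.isTopologicalBasis_of_isOpen_of_nhds
    · rintro u (⟨v, hv, rfl⟩ | ⟨m, rfl⟩)
      · exact OnePoint.isOpen_image_coe.2
          ((TopologicalSpace.isBasis_countableBasis Y).isOpen hv)
      · rw [OnePoint.isOpen_iff_of_mem (Or.inr rfl), hpre, compl_compl]
        exact ⟨(K.isCompact m).isClosed, K.isCompact m⟩
    · intro a u hau hu
      cases a with
      | infty =>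
          have hcomp : IsCompact (((↑) ⁻¹' u : Set Y)ᶜ) :=
            ((OnePoint.isOpen_iff_of_mem' hau).1 hu).1
          obtain ⟨m, hm⟩ := K.exists_superset_of_isCompact hcomp
          refine ⟨(↑) '' (K m)ᶜ ∪ {OnePoint.infty}, Or.inr ⟨m, rfl⟩, Or.inr rfl, ?_⟩
          rintro z (⟨y, hy, rfl⟩ | hz)
          · by_contra hzu
            exact hy (hm hzu)
          · rwa [mem_singleton_iff.1 hz]
      | coe y =>
          have hyo : y ∈ ((↑) ⁻¹' u : Set Y) := hau
          have hopen : IsOpen ((↑) ⁻¹' u : Set Y) := (OnePoint.isOpen_def.1 hu).2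
          obtain ⟨v, hvB, hyv, hvu⟩ :=
            (TopologicalSpace.isBasis_countableBasis Y).exists_subset_of_mem_open hyo hopen
          exact ⟨(↑) '' v, Or.inl ⟨v, hvB, rfl⟩, ⟨y, hyv, rfl⟩,
            by rintro z ⟨y', hy', rfl⟩; exact hvu hy'⟩
  exact hbasis.secondCountableTopology
    (((TopologicalSpace.countable_countableBasis Y).image _).union (Set.countable_range _))

namespace W0

variable {X : ℕ → Type}

open Classical in
/-- The canonical map `Π_i X_i^∞ → (X_0 × ⋯ × X_{n-1})^∞` collapsing all points with
some coordinate at infinity (among the first `n`) to the point at infinity. -/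
noncomputable def psi (n : ℕ) (x : ∀ i, OnePoint (X i)) : OnePoint (∀ i : Fin n, X i) :=
  if h : ∀ i : Fin n, x i ≠ OnePoint.infty then
    ((fun i : Fin n => val (x i) (h i)) : ∀ i : Fin n, X i)
  else OnePoint.infty

/-- The embedding of `W₀` into `Π_n (X_0 × ⋯ × X_{n-1})^∞`. -/
noncomputable def Fmap (w : W0 X) (n : ℕ) : OnePoint (∀ i : Fin n, X i) :=
  Sum.elim
    (fun p : Σ k : ℕ, ∀ i : Fin k, X i =>
      if h : n ≤ p.1 then
        ((fun i : Fin n => p.2 ⟨i, lt_of_lt_of_le i.isLt h⟩) : ∀ i : Fin n, X i)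
      else OnePoint.infty)
    (fun z => ((fun i : Fin n => z i) : ∀ i : Fin n, X i)) w

section Continuity

variable [∀ n, TopologicalSpace (X n)] [∀ n, T2Space (X n)]

lemma continuous_psi (n : ℕ) : Continuous (psi (X := X) n) := by
  rw [continuous_iff_continuousAt]
  intro x
  by_cases h : ∀ i : Fin n, x i ≠ OnePoint.infty
  · -- all relevant coordinates are finite
    set a : ∀ i : Fin n, X i := fun i => val (x i) (h i) with ha
    have hx : ∀ i : Fin n, x (i : ℕ) = ((a i : X i) : OnePoint (X i)) :=
      fun i => (coe_val_s8 _ (h i)).symm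
    have hval : psi n x = (a : OnePoint (∀ i : Fin n, X i)) := by
      unfold psi; rw [dif_pos h]
    rw [ContinuousAt, hval, OnePoint.nhds_coe_eq, Filter.tendsto_def]
    intro t ht
    rw [Filter.mem_map] at ht
    obtain ⟨s, hst, hso, has⟩ := mem_nhds_iff.mp ht
    obtain ⟨I, u, hu, hIu⟩ := isOpen_pi_iff.mp hso a has
    have hN : (⋂ i : Fin n, (fun y : ∀ m, OnePoint (X m) => y (i : ℕ)) ⁻¹'
          (Set.range ((↑) : X i → OnePoint (X i)))) ∩
        (⋂ i ∈ I, (fun y : ∀ m, OnePoint (X m) => y (i : ℕ)) ⁻¹'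
          (((↑) : X i → OnePoint (X i)) '' u i)) ∈ 𝓝 x := by
      refine Filter.inter_mem ?_ ?_
      · refine (Filter.iInter_mem).2 fun i => ?_
        refine (continuous_apply (i : ℕ)).continuousAt.preimage_mem_nhds ?_
        rw [hx i]
        exact OnePoint.isOpen_range_coe.mem_nhds ⟨a i, rfl⟩
      · refine (Filter.biInter_finset_mem I).2 fun i hi => ?_
        refine (continuous_apply (i : ℕ)).continuousAt.preimage_mem_nhds ?_
        rw [hx i]
        exact (OnePoint.isOpen_image_coe.2 (hu i hi).1).mem_nhds ⟨a i, (hu i hi).2, rfl⟩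
    refine Filter.mem_of_superset hN ?_
    rintro y ⟨hy1, hy2⟩
    simp only [Set.mem_iInter, Set.mem_preimage] at hy1 hy2
    have hy' : ∀ i : Fin n, y (i : ℕ) ≠ OnePoint.infty := by
      intro i
      obtain ⟨b, hb⟩ := hy1 i
      rw [← hb]; exact OnePoint.coe_ne_infty b
    have hps : psi n y = ((fun i : Fin n => val (y i) (hy' i)) : ∀ i : Fin n, X i) := by
      unfold psi; rw [dif_pos hy']
    rw [Set.mem_preimage, hps]
    refine hst (hIu ?_)
    intro i hiI
    obtain ⟨c, hcu, hc⟩ := hy2 i hiI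
    have hv : val (y (i : ℕ)) (hy' i) = c :=
      OnePoint.coe_injective (by rw [coe_val_s8]; exact hc.symm)
    show val (y (i : ℕ)) (hy' i) ∈ u i
    rw [hv]; exact hcu
  · -- some coordinate is at infinity
    push_neg at h
    obtain ⟨i0, hi0⟩ := h
    have hval : psi n x = OnePoint.infty := by
      unfold psi
      rw [dif_neg]
      push_neg
      exact ⟨i0, hi0⟩
    rw [ContinuousAt, hval, OnePoint.hasBasis_nhds_infty.tendsto_right_iff]
    rintro s ⟨hscl, hsc⟩
    set K : Set (X i0) := (fun b : ∀ i : Fin n, X i => b i0) '' s with hKdef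
    have hKc : IsCompact K := hsc.image (continuous_apply i0)
    have hN : (fun y : ∀ m, OnePoint (X m) => y (i0 : ℕ)) ⁻¹'
        (((↑) : X i0 → OnePoint (X i0)) '' Kᶜ ∪ {OnePoint.infty}) ∈ 𝓝 x := by
      refine (continuous_apply (i0 : ℕ)).continuousAt.preimage_mem_nhds ?_
      rw [hi0]
      exact OnePoint.hasBasis_nhds_infty.mem_of_mem ⟨hKc.isClosed, hKc⟩
    filter_upwards [hN] with y hy
    by_cases hy' : ∀ i : Fin n, y (i : ℕ) ≠ OnePoint.infty
    · have hpsi : psi n y = ((fun i : Fin n => val (y i) (hy' i)) : ∀ i : Fin n, X i) := by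
        unfold psi; rw [dif_pos hy']
      rw [hpsi]
      left
      refine ⟨_, ?_, rfl⟩
      intro hmem
      rcases hy with hco | hinf
      · obtain ⟨c, hcK, hc⟩ := hco
        have hc' : (c : OnePoint (X i0)) = y (i0 : ℕ) := hc
        have hcv : val (y (i0 : ℕ)) (hy' i0) = c :=
          OnePoint.coe_injective (by rw [coe_val_s8, ← hc'])
        exact hcK (hcv ▸ ⟨_, hmem, rfl⟩)
      · exact hy' i0 hinf
    · have hps : psi n y = OnePoint.infty := by unfold psi; rw [dif_neg hy']
      rw [hps]
      exact Or.inr rfl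

end Continuity

open Classical in
lemma Fmap_Q (x : ∀ n, OnePoint (X n)) (n : ℕ) : Fmap (W0.Q x) n = psi n x := by
  unfold Q
  by_cases h : ∃ m, x m = OnePoint.infty
  · rw [dif_pos h]
    by_cases hn : n ≤ Nat.find h
    · have hne : ∀ i : Fin n, x i ≠ OnePoint.infty :=
        fun i => Nat.find_min h (lt_of_lt_of_le i.isLt hn)
      have h1 : Fmap (W0.fin ⟨Nat.find h, fun i => W0.val (x i) (Nat.find_min h i.isLt)⟩) n
          = ((fun i : Fin n => W0.val (x i) (hne i)) : ∀ i : Fin n, X i) := by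
        unfold Fmap fin
        rw [Sum.elim_inl, dif_pos hn]
      have h2 : psi n x = ((fun i : Fin n => W0.val (x i) (hne i)) : ∀ i : Fin n, X i) := by
        unfold psi; rw [dif_pos hne]
      rw [h1, h2]
    · have hne : ¬∀ i : Fin n, x i ≠ OnePoint.infty := by
        push_neg
        exact ⟨⟨Nat.find h, Nat.lt_of_not_le hn⟩, Nat.find_spec h⟩
      have h1 : Fmap (W0.fin ⟨Nat.find h, fun i => W0.val (x i) (Nat.find_min h i.isLt)⟩) n
          = OnePoint.infty := by
        unfold Fmap fin
        rw [Sum.elim_inl, dif_neg hn]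
      have h2 : psi n x = OnePoint.infty := by unfold psi; rw [dif_neg hne]
      rw [h1, h2]
  · rw [dif_neg h]
    have hne : ∀ i : Fin n, x i ≠ OnePoint.infty := fun i hi => h ⟨i, hi⟩
    have h1 : Fmap (W0.inf (X := X) (fun m => W0.val (x m) (fun hm => h ⟨m, hm⟩))) n
        = ((fun i : Fin n => W0.val (x i) (hne i)) : ∀ i : Fin n, X i) := by
      unfold Fmap inf
      rw [Sum.elim_inr]
    have h2 : psi n x = ((fun i : Fin n => W0.val (x i) (hne i)) : ∀ i : Fin n, X i) := by
      unfold psi; rw [dif_pos hne]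
    rw [h1, h2]

lemma sigma_mk_eq {k k' : ℕ} (h : k = k') {f : ∀ i : Fin k, X i} {f' : ∀ i : Fin k', X i}
    (hf : ∀ (i : ℕ) (hi : i < k) (hi' : i < k'), f ⟨i, hi⟩ = f' ⟨i, hi'⟩) :
    (⟨k, f⟩ : Σ m : ℕ, ∀ i : Fin m, X i) = ⟨k', f'⟩ := by
  subst h
  exact congrArg (Sigma.mk k) (funext fun i => hf i i.isLt i.isLt)

lemma Fmap_injective : Function.Injective (Fmap (X := X)) := by
  intro w w' hww
  have h : ∀ n, Fmap w n = Fmap w' n := fun n => congrFun hww n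
  cases w with
  | inl p =>
    obtain ⟨k, f⟩ := p
    cases w' with
    | inl p' =>
      obtain ⟨k', f'⟩ := p'
      have hk : k = k' := by
        by_contra hne
        rcases Nat.lt_or_ge k k' with hlt | hge
        · have := h k'
          simp only [Fmap, Sum.elim_inl, dif_neg (Nat.not_le.2 hlt), dif_pos (le_refl k')]
            at this
          exact OnePoint.coe_ne_infty _ this.symm
        · have hlt : k' < k := lt_of_le_of_ne hge (fun e => hne e.symm)
          have := h k
          simp only [Fmap, Sum.elim_inl, dif_pos (le_refl k), dif_neg (Nat.not_le.2 hlt)]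
            at this
          exact OnePoint.coe_ne_infty _ this
      refine congrArg Sum.inl (sigma_mk_eq hk ?_)
      intro i hi hi'
      have := h k
      simp only [Fmap, Sum.elim_inl, dif_pos (le_refl k), dif_pos (le_of_eq hk)] at this
      have := OnePoint.coe_injective this
      have := congrFun this ⟨i, hi⟩
      simpa using this
    | inr z =>
      have := h (k + 1)
      simp only [Fmap, Sum.elim_inl, Sum.elim_inr, dif_neg (Nat.not_succ_le_self k)] at this
      exact absurd this.symm (OnePoint.coe_ne_infty _)
  | inr z =>
    cases w' with
    | inl p' =>
      obtain ⟨k', f'⟩ := p'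
      have := h (k' + 1)
      simp only [Fmap, Sum.elim_inl, Sum.elim_inr, dif_neg (Nat.not_succ_le_self k')] at this
      exact absurd this (OnePoint.coe_ne_infty _)
    | inr z' =>
      refine congrArg Sum.inr (funext fun m => ?_)
      have := h (m + 1)
      simp only [Fmap, Sum.elim_inr] at this
      have := OnePoint.coe_injective this
      exact congrFun this ⟨m, Nat.lt_succ_self m⟩

open Classical in
lemma Q_coord (w : W0 X) : W0.Q (W0.coord w) = w := by
  cases w with
  | inr z =>
    have h : ¬∃ n, W0.coord (Sum.inr z : W0 X) n = OnePoint.infty := by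
      rintro ⟨n, hn⟩
      exact OnePoint.coe_ne_infty (z n) hn
    unfold Q
    rw [dif_neg h]
    refine congrArg Sum.inr (funext fun n => ?_)
    exact val_coe (z n) _
  | inl p =>
    obtain ⟨k, f⟩ := p
    have hcoord : ∀ (i : ℕ) (hi : i < k),
        W0.coord (Sum.inl ⟨k, f⟩ : W0 X) i = ((f ⟨i, hi⟩ : X i) : OnePoint (X i)) := by
      intro i hi
      simp only [coord, Sum.elim_inl]
      rw [dif_pos hi]
    have h : ∃ n, W0.coord (Sum.inl ⟨k, f⟩ : W0 X) n = OnePoint.infty := by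
      refine ⟨k, ?_⟩
      simp only [coord, Sum.elim_inl]
      rw [dif_neg (lt_irrefl k)]
    have hfind : Nat.find h = k := by
      rw [Nat.find_eq_iff]
      constructor
      · simp only [coord, Sum.elim_inl]
        rw [dif_neg (lt_irrefl k)]
      · intro m hm hme
        rw [hcoord m hm] at hme
        exact OnePoint.coe_ne_infty _ hme
    unfold Q
    rw [dif_pos h]
    refine congrArg Sum.inl (sigma_mk_eq hfind ?_)
    intro i hi hi'
    refine OnePoint.coe_injective ?_
    rw [coe_val_s8, hcoord i hi']

end W0

end Aux

/-- Corollary 3.3: the space `W = W₀ \ {0}`, with the subspace topology inherited from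
the quotient topology on `W₀`, is a locally compact metrizable space. -/
theorem stmt8 (X : ℕ → Type) [∀ n, TopologicalSpace (X n)]
    [∀ n, LocallyCompactSpace (X n)] [∀ n, SecondCountableTopology (X n)]
    [∀ n, T2Space (X n)] :
    LocallyCompactSpace {w : W0 X // w ≠ W0.zero} ∧
      TopologicalSpace.MetrizableSpace {w : W0 X // w ≠ W0.zero} := by
  -- the target space of the embedding is compact metrizable
  haveI hsc : ∀ n, SecondCountableTopology (OnePoint (∀ i : Fin n, X i)) := fun n =>
    onePoint_secondCountable _
  haveI hmet : ∀ n, TopologicalSpace.MetrizableSpace (OnePoint (∀ i : Fin n, X i)) := fun n =>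
    inferInstance
  -- `Q` is a continuous surjection, hence `W₀` is compact
  have hQc : Continuous (W0.Q : (∀ n, OnePoint (X n)) → W0 X) := continuous_coinduced_rng
  have hQs : Function.Surjective (W0.Q : (∀ n, OnePoint (X n)) → W0 X) :=
    fun w => ⟨W0.coord w, W0.Q_coord w⟩
  haveI : CompactSpace (W0 X) := ⟨by
    rw [← hQs.range_eq]
    exact isCompact_range hQc⟩
  -- `Fmap` is continuous since its composition with `Q` is
  have hcomp : Continuous ((W0.Fmap (X := X)) ∘ W0.Q) := by
    apply continuous_pi
    intro n
    have : (fun x : ∀ m, OnePoint (X m) => (W0.Fmap (W0.Q x)) n) = W0.psi n := by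
      funext x
      exact W0.Fmap_Q x n
    show Continuous (fun x : ∀ m, OnePoint (X m) => (W0.Fmap (W0.Q x)) n)
    rw [this]
    exact W0.continuous_psi n
  have hFc : Continuous (W0.Fmap (X := X)) := continuous_coinduced_dom.mpr hcomp
  -- a continuous injection from a compact space to a T2 space is a closed embedding
  have hemb : Topology.IsClosedEmbedding (W0.Fmap (X := X)) :=
    hFc.isClosedEmbedding W0.Fmap_injective
  haveI : T2Space (W0 X) := hemb.toIsEmbedding.t2Space
  haveI : TopologicalSpace.MetrizableSpace (W0 X) := hemb.toIsEmbedding.metrizableSpace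
  haveI : LocallyCompactSpace (W0 X) := inferInstance
  have hopen : IsOpen {w : W0 X | w ≠ W0.zero} := by
    rw [show {w : W0 X | w ≠ W0.zero} = ({W0.zero} : Set (W0 X))ᶜ from rfl]
    exact isClosed_singleton.isOpen_compl
  exact ⟨hopen.locallyCompactSpace,
    TopologicalSpace.MetrizableSpace.subtype {w : W0 X | w ≠ W0.zero}⟩
end
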